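/- Assuming Demazure surjectivity with δ ∈ 𝔥* satisfying ∂_s(δ) = 1, the ring R is free of rank 2 as a module over R^s, with basis {1, δ}. Moreover {1, δ} and {-s(δ), 1} are dual bases for the R^s-bilinear pairing (g,h) ↦ ∂_s(gh). -/
import Mathlib


open MvPolynomial

/-- The linear polynomial in `R = Sym(𝔥*)` corresponding to the element of `𝔥*`
with coordinates `φ` (identifying `𝔥` with `Fin n → k` so that `𝔥*` has dual basis
corresponding to the variables `X i`). -/
noncomputable def lin {k : Type*} [CommRing k] {n : ℕ} (φ : Fin n → k) :
    MvPolynomial (Fin n) k :=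
  ∑ i, C (φ i) * X i

/-- The reflection `s` acting on `R = Sym(𝔥*)`, induced by
`s(γ) = γ - ⟨α^∨, γ⟩·α` on `𝔥*`, where `α^∨ ∈ 𝔥` has coordinates `αv` and
`α ∈ 𝔥*` has coordinates `α`. -/
noncomputable def sRefl {k : Type*} [CommRing k] {n : ℕ} (αv α : Fin n → k) :
    MvPolynomial (Fin n) k →ₐ[k] MvPolynomial (Fin n) k :=
  aeval (fun i => X i - C (αv i) * lin α)

section AuxLemmas
variable {k : Type*} [CommRing k] {n : ℕ} (αv α : Fin n → k)

lemma sRefl_X (i : Fin n) : sRefl αv α (X i) = X i - C (αv i) * lin α :=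
  aeval_X _ i

lemma sRefl_C (c : k) : sRefl αv α (C c) = C c := by
  simp [sRefl, algebraMap_eq]

lemma sRefl_lin (γ : Fin n → k) :
    sRefl αv α (lin γ) = lin γ - C (∑ i, αv i * γ i) * lin α := by
  simp only [sRefl, lin, map_sum, map_mul, aeval_C, aeval_X, Finset.sum_mul,
    mul_sub, ← Finset.sum_sub_distrib, algebraMap_eq]
  refine Finset.sum_congr rfl fun i _ => ?_
  ring

lemma sRefl_linα (hpair : ∑ i, αv i * α i = 2) : sRefl αv α (lin α) = - lin α := by
  rw [sRefl_lin, hpair]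
  have : (C 2 : MvPolynomial (Fin n) k) = 2 := by rw [show (2:k) = 1 + 1 by ring, map_add, map_one]; ring
  rw [this]; ring

lemma sRefl_sRefl (hpair : ∑ i, αv i * α i = 2) (f : MvPolynomial (Fin n) k) :
    sRefl αv α (sRefl αv α f) = f := by
  have : (sRefl αv α).comp (sRefl αv α) = AlgHom.id k _ := by
    apply MvPolynomial.algHom_ext
    intro i
    simp only [AlgHom.comp_apply, AlgHom.id_apply, sRefl_X, map_sub, map_mul, sRefl_C,
      sRefl_linα αv α hpair]
    ring
  calc sRefl αv α (sRefl αv α f) = ((sRefl αv α).comp (sRefl αv α)) f := rfl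
    _ = f := by rw [this]; rfl

lemma lin_ne_zero (hne : ∃ i, α i ≠ 0) : lin α ≠ 0 := by
  obtain ⟨i, hi⟩ := hne
  intro h
  have := congrArg (coeff (Finsupp.single i 1)) h
  simp [lin, coeff_sum, coeff_C_mul, coeff_X', Finsupp.single_left_inj] at this
  exact hi this

end AuxLemmas

/-- Assuming Demazure surjectivity with `δ ∈ 𝔥*` satisfying `∂_s(δ) = 1`
(i.e. `⟨α_s^∨, δ⟩ = 1`), the ring `R` is free of rank 2 as a module over `R^s` with
basis `{1, δ}` (every `f ∈ R` is uniquely `h·1 + g·δ` with `g, h ∈ R^s`). Moreover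
`{1, δ}` and `{-s(δ), 1}` are dual bases for the pairing `(g,h) ↦ ∂_s(gh)`:
for every `f ∈ R`, `f = ∂_s(f·(-s(δ)))·1 + ∂_s(f)·δ`. -/
theorem free_rank_two_dual_bases {k : Type*} [CommRing k] [IsDomain k] {n : ℕ}
    (αv α : Fin n → k) (hpair : ∑ i, αv i * α i = 2)
    (δ : Fin n → k) (hδ : ∑ i, αv i * δ i = 1)
    (hDS2 : ∃ v : Fin n → k, ∑ i, α i * v i = 1)
    (D : MvPolynomial (Fin n) k →ₗ[k] MvPolynomial (Fin n) k)
    (hD : ∀ f, lin α * D f = f - sRefl αv α f) :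
    (∀ f : MvPolynomial (Fin n) k,
      ∃! p : MvPolynomial (Fin n) k × MvPolynomial (Fin n) k,
        sRefl αv α p.1 = p.1 ∧ sRefl αv α p.2 = p.2 ∧ f = p.2 * 1 + p.1 * lin δ) ∧
    (∀ f : MvPolynomial (Fin n) k,
      f = D (f * (- sRefl αv α (lin δ))) * 1 + D f * lin δ) := by
  set s := sRefl αv α with hs
  set a := lin α with ha
  set d := lin δ with hd
  -- a ≠ 0
  have ha0 : a ≠ 0 := by
    apply lin_ne_zero
    obtain ⟨v, hv⟩ := hDS2
    by_contra hno
    push_neg at hno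
    simp [hno] at hv
  have cancel : ∀ x y : MvPolynomial (Fin n) k, a * x = a * y → x = y :=
    fun x y h => mul_left_cancel₀ ha0 h
  -- s d = d - a
  have hsd : s d = d - a := by
    rw [hd, hs, sRefl_lin, hδ, map_one, one_mul]
  -- s a = -a
  have hsa : s a = -a := sRefl_linα αv α hpair
  -- s involution
  have hss : ∀ f, s (s f) = f := sRefl_sRefl αv α hpair
  -- D is s-invariant
  have hDinv : ∀ f, s (D f) = D f := by
    intro f
    apply cancel
    have h1 : s (a * D f) = s f - s (s f) := by rw [hD f, map_sub]
    rw [map_mul, hsa, hss] at h1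
    rw [hD f]
    linear_combination -h1
  -- D kills invariants
  have hDzero : ∀ g, s g = g → D g = 0 := by
    intro g hg
    apply cancel
    rw [hD g, hg, mul_zero, sub_self]
  -- twisted Leibniz
  have hLeib : ∀ f g, D (f * g) = D f * g + s f * D g := by
    intro f g
    apply cancel
    rw [hD (f * g), map_mul]
    have h1 := hD f
    have h2 := hD g
    linear_combination -g * h1 - s f * h2
  -- D d = 1
  have hDd : D d = 1 := by
    apply cancel
    rw [hD d, hsd, mul_one]
    ring
  -- D (s f) = - D f
  have hDs : ∀ f, D (s f) = - D f := by
    intro f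
    apply cancel
    rw [hD (s f), hss f]
    linear_combination hD f
  constructor
  · intro f
    refine ⟨(D f, f - D f * d), ⟨hDinv f, ?_, by ring⟩, ?_⟩
    · -- s (f - D f * d) = f - D f * d
      rw [map_sub, map_mul, hDinv, hsd]
      linear_combination hD f
    · rintro ⟨g, h⟩ ⟨hg, hh, hf⟩
      have hgval : g = D f := by
        rw [hf, mul_one, map_add, hDzero h hh, hLeib, hDd, hDzero g hg, hg]
        ring
      have : h = f - D f * d := by
        rw [← hgval]
        rw [hf]; ring
      simp [hgval, this]
  · intro f
    have key : D (f * (- s d)) = f - D f * d := by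
      have h1 : f * (- s d) = f * (a - d) := by rw [hsd]; ring
      rw [h1, show f * (a - d) = f * a - f * d by ring, map_sub, hLeib, hLeib]
      have hDa : D a = 2 := by
        apply cancel
        rw [hD a, hsa]
        ring
      rw [hDd, hDa]
      have hsf : s f = f - a * D f := by linear_combination hD f
      rw [hsf]
      ring
    rw [key, mul_one]
    ring
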